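/- Let (E, L, E) be a labeled space in which every loop has an exit. Then (E, L, E) satisfies Condition (L), i.e., every cycle has an exit. -/

import Mathlib

universe u v

variable {V : Type u} {Λ : Type v}

/-- The relative range `r(S, α)` of a set of vertices along a labeled path. -/
def relRange (Edge : V → Λ → V → Prop) : Set V → List Λ → Set V
  | S, [] => S
  | S, a :: α => relRange Edge {w | ∃ u ∈ S, Edge u a w} α

/-- The range `r(α)` of a labeled path. -/
def lrange (Edge : V → Λ → V → Prop) (α : List Λ) : Set V :=
  relRange Edge Set.univ α

/-- `α` is a (nonempty) labeled path of the labeled graph. -/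
def IsLP (Edge : V → Λ → V → Prop) (α : List Λ) : Prop :=
  α ≠ [] ∧ (lrange Edge α).Nonempty

/-- `L(SE¹)`: labels of edges emitted from `S`. -/
def edgeLabels (Edge : V → Λ → V → Prop) (S : Set V) : Set Λ :=
  {a | ∃ u ∈ S, ∃ w, Edge u a w}

/-- `S` is regular: every nonempty `B ∈ ℬ` with `B ⊆ S` emits a finite nonzero set of labels. -/
def RegularSet (Edge : V → Λ → V → Prop) (ℬ : Set (Set V)) (S : Set V) : Prop :=
  ∀ B ∈ ℬ, B ⊆ S → B.Nonempty →
    (edgeLabels Edge B).Finite ∧ (edgeLabels Edge B).Nonempty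

/-- `H ⊆ ℬ` is hereditary. -/
def Hered (Edge : V → Λ → V → Prop) (ℬ H : Set (Set V)) : Prop :=
  H ⊆ ℬ ∧ (∀ A ∈ H, ∀ α : List Λ, IsLP Edge α → relRange Edge A α ∈ H) ∧
    (∀ A ∈ H, ∀ B ∈ H, A ∪ B ∈ H) ∧ (∀ A ∈ H, ∀ B ∈ ℬ, B ⊆ A → B ∈ H)

/-- `H` is saturated. -/
def Satur (Edge : V → Λ → V → Prop) (ℬ H : Set (Set V)) : Prop :=
  ∀ A ∈ ℬ, RegularSet Edge ℬ A →
    (∀ α : List Λ, IsLP Edge α → relRange Edge A α ∈ H) → A ∈ H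

/-- `H(A)`: sets covered by finitely many relative ranges `r(A, αᵢ)`, `αᵢ ∈ L^#(E)`. -/
def HSet (Edge : V → Λ → V → Prop) (ℬ : Set (Set V)) (A : Set V) : Set (Set V) :=
  {B ∈ ℬ | ∃ l : List (List Λ), (∀ α ∈ l, α = [] ∨ IsLP Edge α) ∧
    B ⊆ ⋃ α ∈ l, relRange Edge A α}

/-- `S(H(A))`: the saturation of `H(A)`. -/
def SHSet (Edge : V → Λ → V → Prop) (ℬ : Set (Set V)) (A : Set V) : Set (Set V) :=
  {B ∈ ℬ | ∃ n : ℕ,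
    (∀ β : List Λ, (β = [] ∨ IsLP Edge β) → β.length = n →
      relRange Edge B β ∈ HSet Edge ℬ A) ∧
    (∀ γ : List Λ, (γ = [] ∨ IsLP Edge γ) → γ.length < n →
      ∃ C ∈ HSet Edge ℬ A, ∃ D ∈ ℬ, RegularSet Edge ℬ D ∧ relRange Edge B γ = C ∪ D)}

/-- `ℬ` is an accommodating set for the labeled graph. -/
def Accommodating (Edge : V → Λ → V → Prop) (ℬ : Set (Set V)) : Prop :=
  (∀ α : List Λ, IsLP Edge α → lrange Edge α ∈ ℬ) ∧
    (∀ A ∈ ℬ, ∀ α : List Λ, IsLP Edge α → relRange Edge A α ∈ ℬ) ∧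
    (∀ A ∈ ℬ, ∀ B ∈ ℬ, A ∪ B ∈ ℬ) ∧ (∀ A ∈ ℬ, ∀ B ∈ ℬ, A ∩ B ∈ ℬ)

/-- `ℬ` is non-degenerate: closed under relative complements (and contains `∅`). -/
def NonDegenerate (ℬ : Set (Set V)) : Prop :=
  (∅ : Set V) ∈ ℬ ∧ ∀ A ∈ ℬ, ∀ B ∈ ℬ, A \ B ∈ ℬ

/-- The labeled space is weakly left-resolving. -/
def WLR (Edge : V → Λ → V → Prop) (ℬ : Set (Set V)) : Prop :=
  ∀ A ∈ ℬ, ∀ B ∈ ℬ, ∀ α : List Λ, IsLP Edge α →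
    relRange Edge (A ∩ B) α = relRange Edge A α ∩ relRange Edge B α

/-- `ℬ` is the smallest non-degenerate accommodating set. -/
def SmallestAccom (Edge : V → Λ → V → Prop) (ℬ : Set (Set V)) : Prop :=
  Accommodating Edge ℬ ∧ NonDegenerate ℬ ∧
    ∀ ℬ' : Set (Set V), Accommodating Edge ℬ' → NonDegenerate ℬ' → ℬ ⊆ ℬ'

/-- `x_{[1,n]}`: the length-`n` prefix of an infinite word. -/
def wordPrefix (x : ℕ → Λ) (n : ℕ) : List Λ := List.ofFn fun i : Fin n => x i.val

/-- `x` lies in the closure of `L(E^∞)`: all finite prefixes are labeled paths. -/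
def InfWord (Edge : V → Λ → V → Prop) (x : ℕ → Λ) : Prop :=
  ∀ n : ℕ, 1 ≤ n → IsLP Edge (wordPrefix x n)

/-- Strong cofinality of a labeled space. -/
def StrCofinal (Edge : V → Λ → V → Prop) (ℬ : Set (Set V)) : Prop :=
  ∀ A ∈ ℬ, A.Nonempty → ∀ x : ℕ → Λ, InfWord Edge x →
    ∃ N : ℕ, 1 ≤ N ∧ ∃ l : List (List Λ), (∀ α ∈ l, IsLP Edge α) ∧
      lrange Edge (wordPrefix x N) ⊆ ⋃ α ∈ l, relRange Edge A α

/-- Minimality: the only hereditary saturated subsets of `ℬ` are `{∅}` and `ℬ`. -/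
def MinimalLS (Edge : V → Λ → V → Prop) (ℬ : Set (Set V)) : Prop :=
  ∀ H : Set (Set V), Hered Edge ℬ H → Satur Edge ℬ H → H ⊆ {∅} ∨ H = ℬ

/-- `L(SEⁿ)`: labels of paths of length `n` with source in `S`. -/
def labelsOfLen (Edge : V → Λ → V → Prop) (S : Set V) (n : ℕ) : Set (List Λ) :=
  {β | β.length = n ∧ (relRange Edge S β).Nonempty}

/-- The labeled space is disagreeable. -/
def Disagreeable (Edge : V → Λ → V → Prop) (ℬ : Set (Set V)) : Prop :=
  ∀ A ∈ ℬ, A.Nonempty → ∀ β : List Λ, IsLP Edge β →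
    ∃ n : ℕ, 1 ≤ n ∧ labelsOfLen Edge A (β.length * n) ≠ {(List.replicate n β).flatten}

/-- `(α, A)` is a cycle. -/
def IsCycle (Edge : V → Λ → V → Prop) (ℬ : Set (Set V)) (α : List Λ) (A : Set V) : Prop :=
  IsLP Edge α ∧ A ∈ ℬ ∧ A.Nonempty ∧ ∀ B ∈ ℬ, B ⊆ A → relRange Edge B α = B

/-- The cycle `(α, A)` has an exit. -/
def CycleHasExit (Edge : V → Λ → V → Prop) (ℬ : Set (Set V)) (α : List Λ) (A : Set V) : Prop :=
  ∃ t : ℕ, 1 ≤ t ∧ t ≤ α.length ∧ ∃ B ∈ ℬ, B.Nonempty ∧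
    B ⊆ relRange Edge A (α.take t) ∧
    edgeLabels Edge B ≠ {a : Λ | α[t % α.length]? = some a}

/-- The cycle `(α, A)` has no exits. -/
def CycleNoExit (Edge : V → Λ → V → Prop) (ℬ : Set (Set V)) (α : List Λ) (A : Set V) : Prop :=
  ∀ t : ℕ, 1 ≤ t → t ≤ α.length → ∀ B ∈ ℬ, B.Nonempty →
    B ⊆ relRange Edge A (α.take t) →
    RegularSet Edge ℬ B ∧ edgeLabels Edge B = {a : Λ | α[t % α.length]? = some a}

/-- Condition (L): every cycle has an exit. -/
def CondL (Edge : V → Λ → V → Prop) (ℬ : Set (Set V)) : Prop :=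
  ∀ (α : List Λ) (A : Set V), IsCycle Edge ℬ α A → CycleHasExit Edge ℬ α A

/-- `α` is a loop at `A`. -/
def IsLoop (Edge : V → Λ → V → Prop) (α : List Λ) (A : Set V) : Prop :=
  IsLP Edge α ∧ A ⊆ relRange Edge A α

/-- The loop `(α, A)` has an exit. -/
def LoopHasExit (Edge : V → Λ → V → Prop) (α : List Λ) (A : Set V) : Prop :=
  {β : List Λ | ∃ k : ℕ, 1 ≤ k ∧ k ≤ α.length ∧ β = α.take k} ⊂
      {β : List Λ | 1 ≤ β.length ∧ β.length ≤ α.length ∧ (relRange Edge A β).Nonempty} ∨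
    A ⊂ relRange Edge A α

/-- `β` is an irreducible path: not a repetition of a proper initial path. -/
def IrreduciblePath (β : List Λ) : Prop :=
  ∀ k : ℕ, 1 ≤ k → k < β.length → ∀ m : ℕ, β ≠ (List.replicate m (β.take k)).flatten

/-- The generalized vertex `[v]_l`. -/
def gvClass (Edge : V → Λ → V → Prop) (l : ℕ) (v : V) : Set V :=
  {w | ∀ β : List Λ, 1 ≤ β.length → β.length ≤ l → (v ∈ lrange Edge β ↔ w ∈ lrange Edge β)}

/-- `s(x)`: sources of infinite paths labeled by `x`. -/
def srcInf (Edge : V → Λ → V → Prop) (x : ℕ → Λ) : Set V :=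
  {w | ∃ p : ℕ → V, p 0 = w ∧ ∀ n : ℕ, Edge (p n) (x n) (p (n + 1))}


/-
A cycle `(α, A)` satisfies `r(A, α) = A`, so it is a loop at `A`, and its exit as a loop cannot be
`A ⊊ r(A, α)`. Hence some labeled path `β` with `|β| ≤ |α|` and `r(A, β) ≠ ∅` is not a prefix of `α`.
If `β` first leaves `α` at position `t`, the label `β_{t+1} ≠ α_{t+1}` is emitted by
`r(A, α_{[1,t]})`, which is then an exit of the cycle at `t`; when `t = 0` the exit is read at
`|α|`, where `r(A, α) = A` and `α_{|α|+1} = α₁`.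
-/

namespace List

theorem exists_take_eq_and_getElem?_ne_of_ne_take {α : Type*} :
    ∀ {l l' : List α}, l ≠ l'.take l.length →
      ∃ t < l.length, l.take t = l'.take t ∧ l[t]? ≠ l'[t]?
  | [], _, h => (h rfl).elim
  | a :: l, [], _ => ⟨0, by simp⟩
  | a :: l, a' :: l', h => by
    by_cases ha : a = a'
    · subst ha
      obtain ⟨t, ht, htake, hne⟩ :=
        exists_take_eq_and_getElem?_ne_of_ne_take (l := l) (l' := l') (by simpa using h)
      exact ⟨t + 1, by simpa using ht, by simpa using htake, by simpa using hne⟩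
    · exact ⟨0, by simp, rfl, by simpa using ha⟩

end List

section RelRange

variable (Edge : V → Λ → V → Prop)

theorem relRange_append (S : Set V) (γ δ : List Λ) :
    relRange Edge S (γ ++ δ) = relRange Edge (relRange Edge S γ) δ := by
  induction γ generalizing S with
  | nil => rfl
  | cons a γ ih => exact ih _

theorem relRange_empty (γ : List Λ) : relRange Edge (∅ : Set V) γ = ∅ := by
  induction γ with
  | nil => rfl
  | cons a γ ih => simpa [relRange] using ih

variable {Edge}

theorem Set.Nonempty.relRange_of_append {S : Set V} {γ δ : List Λ}
    (h : (relRange Edge S (γ ++ δ)).Nonempty) : (relRange Edge S γ).Nonempty := by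
  rw [Set.nonempty_iff_ne_empty] at h ⊢
  intro hγ
  rw [relRange_append, hγ, relRange_empty] at h
  exact h rfl

theorem Set.Nonempty.relRange_take {S : Set V} {β : List Λ} (h : (relRange Edge S β).Nonempty)
    (n : ℕ) : (relRange Edge S (β.take n)).Nonempty :=
  Set.Nonempty.relRange_of_append (δ := β.drop n) (by rwa [List.take_append_drop])

theorem getElem_mem_edgeLabels_relRange_take {S : Set V} {β : List Λ}
    (h : (relRange Edge S β).Nonempty) {t : ℕ} (ht : t < β.length) :
    β[t] ∈ edgeLabels Edge (relRange Edge S (β.take t)) := by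
  obtain ⟨w, hw⟩ := h.relRange_take (t + 1)
  rw [List.take_succ_eq_append_getElem ht, relRange_append] at hw
  obtain ⟨u, hu, hE⟩ := hw
  exact ⟨u, hu, w, hE⟩

theorem IsLP.take {β : List Λ} (hβ : IsLP Edge β) {n : ℕ} (hn : 1 ≤ n) : IsLP Edge (β.take n) :=
  ⟨by simp [Nat.one_le_iff_ne_zero.mp hn, hβ.1], hβ.2.relRange_take n⟩

theorem Accommodating.relRange_take_mem {ℬ : Set (Set V)} (hℬ : Accommodating Edge ℬ)
    {A : Set V} (hA : A ∈ ℬ) {α : List Λ} (hα : IsLP Edge α) (n : ℕ) :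
    relRange Edge A (α.take n) ∈ ℬ := by
  rcases Nat.eq_zero_or_pos n with rfl | hn
  · exact hA
  · exact hℬ.2.1 A hA _ (hα.take hn)

end RelRange

theorem cycleHasExit_of_mem_edgeLabels {Edge : V → Λ → V → Prop} {ℬ : Set (Set V)}
    {α : List Λ} {A : Set V} (hαA : relRange Edge A α = A) {t : ℕ} (ht : t < α.length)
    (hmem : relRange Edge A (α.take t) ∈ ℬ) {b : Λ}
    (hb : b ∈ edgeLabels Edge (relRange Edge A (α.take t))) (hbα : α[t]? ≠ some b) :
    CycleHasExit Edge ℬ α A := by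
  have hne : (relRange Edge A (α.take t)).Nonempty := by
    obtain ⟨u, hu, -⟩ := hb
    exact ⟨u, hu⟩
  have hlabels : edgeLabels Edge (relRange Edge A (α.take t)) ≠ {a | α[t]? = some a} :=
    fun h => hbα (by rwa [h] at hb)
  rcases Nat.eq_zero_or_pos t with rfl | htpos
  · refine ⟨α.length, ht, le_rfl, A, hmem, hne, by rw [List.take_length, hαA], ?_⟩
    rwa [Nat.mod_self]
  · refine ⟨t, htpos, ht.le, _, hmem, hne, subset_rfl, ?_⟩
    rwa [Nat.mod_eq_of_lt ht]

theorem loops_have_exits_implies_condL_general (Edge : V → Λ → V → Prop) (ℰ : Set (Set V))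
    (hsm : SmallestAccom Edge ℰ)
    (hex : ∀ A ∈ ℰ, A.Nonempty → ∀ α : List Λ, IsLoop Edge α A → LoopHasExit Edge α A) :
    CondL Edge ℰ := by
  rintro α A ⟨hα, hAℰ, hAne, hfix⟩
  have hαA : relRange Edge A α = A := hfix A hAℰ subset_rfl
  rcases hex A hAℰ hAne α ⟨hα, hαA.ge⟩ with hprefix | hgrow
  · obtain ⟨β, ⟨hβpos, hβlen, hβA⟩, hβprefix⟩ := Set.exists_of_ssubset hprefix
    obtain ⟨t, htβ, htake, hdiverge⟩ := List.exists_take_eq_and_getElem?_ne_of_ne_take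
      (fun h => hβprefix ⟨β.length, hβpos, hβlen, h⟩)
    have hb := getElem_mem_edgeLabels_relRange_take hβA htβ
    rw [htake] at hb
    rw [List.getElem?_eq_getElem htβ] at hdiverge
    exact cycleHasExit_of_mem_edgeLabels hαA (htβ.trans_le hβlen)
      (hsm.1.relRange_take_mem hAℰ hα t) hb (Ne.symm hdiverge)
  · exact (hgrow.ne hαA.symm).elim

/-- if every loop has an exit, then the labeled space satisfies
Condition (L). -/
theorem loops_have_exits_implies_condL (Edge : V → Λ → V → Prop) (ℰ : Set (Set V))
    (hsm : SmallestAccom Edge ℰ) (hwlr : WLR Edge ℰ)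
    (hex : ∀ A ∈ ℰ, A.Nonempty → ∀ α : List Λ, IsLoop Edge α A → LoopHasExit Edge α A) :
    CondL Edge ℰ :=
  loops_have_exits_implies_condL_general Edge ℰ hsm hex
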